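/- arXiv:1807.07707 — 3 statements merged into one kernel-verified Lean document; each statement's English description precedes it below -/
import Mathlib

section
/- Let L₁, L₂, σ² > 0 and γ₁, γ₂ ∈ (0,1) with γ₁ + γ₂ = 1. Then ∫_0^∞ ∫_0^∞ (1/4) e^{-x₁/2} e^{-x₂/2} · max{ log₂(1 + γ₁L₁x₁/(γ₂L₁x₁ + 2σ²)), log₂(1 + γ₁L₂x₂/(γ₂L₂x₂ + 2σ²)) } dx₁ dx₂ ≥ max{ C₁(L₁/σ²) − C₁(γ₂L₁/σ²), C₁(L₂/σ²) − C₁(γ₂L₂/σ²) }. -/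
open Real MeasureTheory Set

/-- `C₁(x) = (1/ln 2) · e^{1/x} · ∫_1^∞ t⁻¹ e^{-t/x} dt`. -/
noncomputable def C1 (x : ℝ) : ℝ :=
  (1 / Real.log 2) * Real.exp (1 / x) * ∫ t in Set.Ioi (1:ℝ), t⁻¹ * Real.exp (-t / x)

/-!
Since `max` dominates each of its arguments and the density `½ e^{-x/2}` has total mass one,
the double integral dominates each single-user rate `∫ ½ e^{-x/2} log₂(1 + SINR(x)) dx`.
With `γ₁ = 1 - γ₂` the SINR term splits as `log₂(1 + y₁x/2) - log₂(1 + y₂x/2)` with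
`y₁ = L/σ²`, `y₂ = γ₂L/σ²`, and `∫ ½ e^{-x/2} log₂(1 + yx/2) dx = C₁(y)`: substitute
`t = 1 + yx/2` and integrate by parts, `b ∫₁^∞ e^{-bt} log t dt = ∫₁^∞ t⁻¹ e^{-bt} dt`.
-/

open Filter Topology

section IteratedIntegral

variable {α β : Type*} [MeasurableSpace α] [MeasurableSpace β] {μ : Measure α} {ν : Measure β}
  {p f : α → ℝ} {q g : β → ℝ}

theorem integrable_prod_mul_mul_max (hp0 : 0 ≤ p) (hq0 : 0 ≤ q) (hp : Integrable p μ)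
    (hq : Integrable q ν) (hpf : Integrable (fun x => p x * f x) μ)
    (hqg : Integrable (fun y => q y * g y) ν) (hf : AEStronglyMeasurable f μ)
    (hg : AEStronglyMeasurable g ν) :
    Integrable (fun z : α × β => p z.1 * q z.2 * max (f z.1) (g z.2)) (μ.prod ν) := by
  refine (hpf.norm.mul_prod hq |>.add (hp.mul_prod hqg.norm)).mono' ?_ (ae_of_all _ fun z => ?_)
  · exact (hp.1.comp_fst.mul hq.1.comp_snd).mul (hf.comp_fst.sup hg.comp_snd)
  · have hpq : 0 ≤ p z.1 * q z.2 := mul_nonneg (hp0 _) (hq0 _)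
    have hmax : |max (f z.1) (g z.2)| ≤ |f z.1| + |g z.2| :=
      (abs_max_le_max_abs_abs).trans (max_le_add_of_nonneg (abs_nonneg _) (abs_nonneg _))
    calc ‖p z.1 * q z.2 * max (f z.1) (g z.2)‖ = p z.1 * q z.2 * |max (f z.1) (g z.2)| := by
          simp only [norm_mul, Real.norm_eq_abs, abs_of_nonneg (hp0 _), abs_of_nonneg (hq0 _)]
      _ ≤ p z.1 * q z.2 * (|f z.1| + |g z.2|) := mul_le_mul_of_nonneg_left hmax hpq
      _ = _ := by
          simp only [Pi.add_apply, Real.norm_eq_abs, abs_mul, abs_of_nonneg (hp0 _),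
            abs_of_nonneg (hq0 _)]
          ring

theorem max_le_integral_integral_mul_mul_max [SFinite μ] [SFinite ν] (hp0 : 0 ≤ p)
    (hq0 : 0 ≤ q) (hp : Integrable p μ) (hq : Integrable q ν)
    (hpf : Integrable (fun x => p x * f x) μ)
    (hqg : Integrable (fun y => q y * g y) ν) (hf : AEStronglyMeasurable f μ)
    (hg : AEStronglyMeasurable g ν) :
    max ((∫ x, p x * f x ∂μ) * ∫ y, q y ∂ν) ((∫ x, p x ∂μ) * ∫ y, q y * g y ∂ν)
      ≤ ∫ x, ∫ y, p x * q y * max (f x) (g y) ∂ν ∂μ := by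
  have hF := integrable_prod_mul_mul_max hp0 hq0 hp hq hpf hqg hf hg
  rw [← integral_prod _ hF, ← integral_prod_mul, ← integral_prod_mul]
  refine max_le (integral_mono (hpf.mul_prod hq) hF fun z => ?_)
    (integral_mono (hp.mul_prod hqg) hF fun z => ?_)
  · calc p z.1 * f z.1 * q z.2 = p z.1 * q z.2 * f z.1 := by ring
      _ ≤ _ := mul_le_mul_of_nonneg_left (le_max_left _ _) (mul_nonneg (hp0 _) (hq0 _))
  · calc p z.1 * (q z.2 * g z.2) = p z.1 * q z.2 * g z.2 := by ring
      _ ≤ _ := mul_le_mul_of_nonneg_left (le_max_right _ _) (mul_nonneg (hp0 _) (hq0 _))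

end IteratedIntegral

section ExponentialIntegral

variable {a b c : ℝ}

theorem integral_comp_one_add_mul_Ioi {E : Type*} [NormedAddCommGroup E] [NormedSpace ℝ E]
    (g : ℝ → E) (hc : 0 < c) :
    ∫ x in Ioi (0:ℝ), g (1 + c * x) = c⁻¹ • ∫ t in Ioi (1:ℝ), g t := by
  have htranslate := (measurePreserving_add_left volume (1:ℝ)).setIntegral_image_emb
    (measurableEmbedding_addLeft 1) g (Ioi 0)
  rw [integral_comp_mul_left_Ioi (fun x => g (1 + x)) 0 hc, mul_zero]
  simpa using congrArg (c⁻¹ • ·) htranslate.symm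

theorem integrableOn_exp_neg_mul_mul_of_abs_le {f : ℝ → ℝ} {K : ℝ} (hb : 0 < b) (ha : 0 ≤ a)
    (hf : AEStronglyMeasurable f (volume.restrict (Ioi a))) (hfK : ∀ x ∈ Ioi a, |f x| ≤ K * x) :
    IntegrableOn (fun x => exp (-b * x) * f x) (Ioi a) := by
  have hint : IntegrableOn (fun x : ℝ => x * exp (-b * x)) (Ioi 0) := by
    simpa using integrableOn_rpow_mul_exp_neg_mul_rpow (s := 1) (p := 1) (by norm_num) one_pos hb
  refine ((hint.mono_set (Ioi_subset_Ioi ha)).const_mul K).mono'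
    ((by fun_prop : Continuous fun x => exp (-b * x)).aestronglyMeasurable.mul hf) ?_
  filter_upwards [ae_restrict_mem measurableSet_Ioi] with x hx
  rw [norm_mul, Real.norm_of_nonneg (exp_pos _).le, Real.norm_eq_abs]
  calc exp (-b * x) * |f x| ≤ exp (-b * x) * (K * x) :=
        mul_le_mul_of_nonneg_left (hfK x hx) (exp_pos _).le
    _ = K * (x * exp (-b * x)) := by ring

theorem integrableOn_exp_neg_mul_mul_log_one_add (hb : 0 < b) (hc : 0 ≤ c) :
    IntegrableOn (fun x => exp (-b * x) * log (1 + c * x)) (Ioi 0) := by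
  refine integrableOn_exp_neg_mul_mul_of_abs_le (K := c) hb le_rfl
    (measurable_log.comp (by fun_prop)).aestronglyMeasurable fun x hx => ?_
  have hcx : 0 ≤ c * x := mul_nonneg hc (le_of_lt hx)
  rw [abs_of_nonneg (log_nonneg (by linarith))]
  linarith [log_le_sub_one_of_pos (by linarith : 0 < 1 + c * x)]

theorem integrableOn_exp_neg_mul_mul_log (hb : 0 < b) :
    IntegrableOn (fun t => exp (-b * t) * log t) (Ioi 1) := by
  refine integrableOn_exp_neg_mul_mul_of_abs_le (K := 1) hb zero_le_one
    measurable_log.aestronglyMeasurable fun t ht => ?_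
  rw [abs_of_nonneg (log_nonneg (le_of_lt ht)), one_mul]
  exact log_le_self (by linarith [mem_Ioi.mp ht])

theorem integrableOn_inv_mul_exp_neg_mul (hb : 0 < b) :
    IntegrableOn (fun t => t⁻¹ * exp (-b * t)) (Ioi 1) := by
  refine (exp_neg_integrableOn_Ioi 1 hb).mono' (by fun_prop) ?_
  filter_upwards [ae_restrict_mem measurableSet_Ioi] with t ht
  have ht0 : 0 < t := by linarith [mem_Ioi.mp ht]
  rw [norm_mul, Real.norm_of_nonneg (inv_pos.2 ht0).le, Real.norm_of_nonneg (exp_pos _).le]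
  exact mul_le_of_le_one_left (exp_pos _).le (inv_le_one_of_one_le₀ (le_of_lt ht))

theorem tendsto_exp_neg_mul_mul_log_atTop (hb : 0 < b) :
    Tendsto (fun t => exp (-b * t) * log t) atTop (𝓝 0) := by
  refine squeeze_zero' ?_ ?_
    (by simpa only [rpow_one] using tendsto_rpow_mul_exp_neg_mul_atTop_nhds_zero 1 b hb)
  · filter_upwards [eventually_ge_atTop 1] with t ht
    exact mul_nonneg (exp_pos _).le (log_nonneg ht)
  · filter_upwards [eventually_ge_atTop 1] with t ht
    rw [mul_comm]
    exact mul_le_mul_of_nonneg_right (log_le_self (by linarith)) (exp_pos _).le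

theorem mul_integral_exp_neg_mul_mul_log (hb : 0 < b) :
    b * ∫ t in Ioi 1, exp (-b * t) * log t = ∫ t in Ioi 1, t⁻¹ * exp (-b * t) := by
  have hderiv : ∀ t ∈ Ici (1:ℝ), HasDerivAt (fun t => -(exp (-b * t) * log t))
      (b * (exp (-b * t) * log t) - t⁻¹ * exp (-b * t)) t := by
    intro t ht
    have ht0 : t ≠ 0 := by linarith [mem_Ici.mp ht]
    have h := (((hasDerivAt_id t).const_mul (-b)).exp.mul (hasDerivAt_log ht0)).neg
    exact h.congr_deriv (by simp only [id]; ring)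
  have hparts := integral_Ioi_of_hasDerivAt_of_tendsto' hderiv
    (((integrableOn_exp_neg_mul_mul_log hb).const_mul b).sub (integrableOn_inv_mul_exp_neg_mul hb))
    (by simpa using (tendsto_exp_neg_mul_mul_log_atTop hb).neg)
  rw [integral_sub ((integrableOn_exp_neg_mul_mul_log hb).const_mul b)
    (integrableOn_inv_mul_exp_neg_mul hb), integral_const_mul] at hparts
  simpa [sub_eq_zero] using hparts

theorem mul_integral_exp_neg_mul_mul_log_one_add (ha : 0 < a) (hc : 0 < c) :
    a * ∫ x in Ioi 0, exp (-a * x) * log (1 + c * x)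
      = exp (a / c) * ∫ t in Ioi 1, t⁻¹ * exp (-(a / c) * t) := by
  have hshift : ∀ x, exp (-a * x) * log (1 + c * x)
      = exp (a / c) * (exp (-(a / c) * (1 + c * x)) * log (1 + c * x)) := by
    intro x
    rw [← mul_assoc, ← exp_add]
    congr 2
    field_simp
    ring
  simp_rw [hshift]
  rw [integral_const_mul, integral_comp_one_add_mul_Ioi (fun t => exp (-(a / c) * t) * log t) hc,
    ← mul_integral_exp_neg_mul_mul_log (div_pos ha hc), smul_eq_mul]
  field_simp

end ExponentialIntegral

theorem C1_eq_integral_exp_neg_mul (y : ℝ) :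
    C1 y = (1 / log 2) * exp (1 / y) * ∫ t in Ioi 1, t⁻¹ * exp (-(1 / y) * t) := by
  rw [C1]
  congr 2 with t
  rw [neg_div, div_eq_inv_mul, neg_mul, one_div]

theorem integrableOn_half_exp_mul_logb_one_add {y : ℝ} (hy : 0 ≤ y) :
    IntegrableOn (fun x => 1 / 2 * exp (-x / 2) * logb 2 (1 + y * x / 2)) (Ioi 0) := by
  refine IntegrableOn.congr_fun ((integrableOn_exp_neg_mul_mul_log_one_add (c := y / 2)
    one_half_pos (by positivity)).const_mul (1 / (2 * log 2))) (fun x _ => ?_) measurableSet_Ioi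
  simp only [logb]
  ring_nf

theorem integral_half_exp_mul_logb_one_add {y : ℝ} (hy : 0 < y) :
    ∫ x in Ioi 0, 1 / 2 * exp (-x / 2) * logb 2 (1 + y * x / 2) = C1 y := by
  have hclosed := mul_integral_exp_neg_mul_mul_log_one_add one_half_pos (half_pos hy)
  rw [show (1 / 2) / (y / 2) = 1 / y by field_simp] at hclosed
  rw [C1_eq_integral_exp_neg_mul, mul_assoc, ← hclosed, ← integral_const_mul, ← integral_const_mul]
  refine setIntegral_congr_fun measurableSet_Ioi fun x _ => ?_
  simp only [logb]
  ring_nf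

theorem integral_half_exp_Ioi : ∫ x in Ioi (0:ℝ), 1 / 2 * exp (-x / 2) = 1 := by
  have h := integral_exp_mul_Ioi (a := -(1 / 2)) (by norm_num) 0
  rw [integral_const_mul]
  simp only [mul_zero, exp_zero] at h
  rw [show (fun x : ℝ => exp (-x / 2)) = fun x => exp (-(1 / 2) * x) by ext x; ring_nf, h]
  norm_num

theorem integrableOn_half_exp_Ioi : IntegrableOn (fun x : ℝ => 1 / 2 * exp (-x / 2)) (Ioi 0) :=
  IntegrableOn.congr_fun ((exp_neg_integrableOn_Ioi 0 one_half_pos).const_mul (1 / 2))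
    (fun x _ => by ring_nf) measurableSet_Ioi

section NOMA

variable {L σ2 γ1 γ2 : ℝ}

theorem logb_one_add_sinr (hL : 0 ≤ L) (hσ : 0 < σ2) (hγ2 : 0 ≤ γ2) (hsum : γ1 + γ2 = 1)
    {x : ℝ} (hx : 0 ≤ x) :
    logb 2 (1 + γ1 * L * x / (γ2 * L * x + 2 * σ2))
      = logb 2 (1 + L / σ2 * x / 2) - logb 2 (1 + γ2 * L / σ2 * x / 2) := by
  have hLx : 0 ≤ L * x := mul_nonneg hL hx
  have hγLx : 0 ≤ γ2 * L * x := by positivity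
  rw [← logb_div (by positivity) (by positivity)]
  congr 1
  rw [show γ1 = 1 - γ2 by linarith]
  field_simp
  ring

theorem integrableOn_half_exp_mul_logb_one_add_sinr (hL : 0 < L) (hσ : 0 < σ2) (hγ2 : 0 < γ2)
    (hsum : γ1 + γ2 = 1) :
    IntegrableOn (fun x => 1 / 2 * exp (-x / 2) * logb 2 (1 + γ1 * L * x / (γ2 * L * x + 2 * σ2)))
      (Ioi 0) := by
  refine ((integrableOn_half_exp_mul_logb_one_add (y := L / σ2) (by positivity)).sub
    (integrableOn_half_exp_mul_logb_one_add (y := γ2 * L / σ2) (by positivity))).congr_fun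
    (fun x hx => ?_) measurableSet_Ioi
  rw [Pi.sub_apply, logb_one_add_sinr hL.le hσ hγ2.le hsum (le_of_lt hx)]
  ring

theorem integral_half_exp_mul_logb_one_add_sinr (hL : 0 < L) (hσ : 0 < σ2) (hγ2 : 0 < γ2)
    (hsum : γ1 + γ2 = 1) :
    ∫ x in Ioi 0, 1 / 2 * exp (-x / 2) * logb 2 (1 + γ1 * L * x / (γ2 * L * x + 2 * σ2))
      = C1 (L / σ2) - C1 (γ2 * L / σ2) := by
  have hy1 : 0 < L / σ2 := by positivity
  have hy2 : 0 < γ2 * L / σ2 := by positivity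
  rw [setIntegral_congr_fun measurableSet_Ioi (fun x hx => by
      rw [logb_one_add_sinr hL.le hσ hγ2.le hsum (le_of_lt hx), mul_sub]),
    integral_sub (integrableOn_half_exp_mul_logb_one_add hy1.le)
      (integrableOn_half_exp_mul_logb_one_add hy2.le),
    integral_half_exp_mul_logb_one_add hy1, integral_half_exp_mul_logb_one_add hy2]

end NOMA

theorem stmt7_general (L1 L2 σ2 γ1 γ2 : ℝ) (hL1 : 0 < L1) (hL2 : 0 < L2) (hσ : 0 < σ2)
    (hγ2 : γ2 ∈ Set.Ioo (0:ℝ) 1) (hsum : γ1 + γ2 = 1) :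
    (∫ x1 in Set.Ioi (0:ℝ), ∫ x2 in Set.Ioi (0:ℝ),
      (1/4) * Real.exp (-x1/2) * Real.exp (-x2/2) *
        max (Real.logb 2 (1 + γ1 * L1 * x1 / (γ2 * L1 * x1 + 2 * σ2)))
            (Real.logb 2 (1 + γ1 * L2 * x2 / (γ2 * L2 * x2 + 2 * σ2))))
      ≥ max (C1 (L1 / σ2) - C1 (γ2 * L1 / σ2)) (C1 (L2 / σ2) - C1 (γ2 * L2 / σ2)) := by
  have hdensity : 0 ≤ fun x : ℝ => 1 / 2 * exp (-x / 2) := fun x => by positivity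
  have hmeas : ∀ L : ℝ,
      Measurable fun x : ℝ => logb 2 (1 + γ1 * L * x / (γ2 * L * x + 2 * σ2)) :=
    fun L => (Measurable.log (by fun_prop)).div_const _
  have key := max_le_integral_integral_mul_mul_max hdensity hdensity
    integrableOn_half_exp_Ioi integrableOn_half_exp_Ioi
    (integrableOn_half_exp_mul_logb_one_add_sinr hL1 hσ hγ2.1 hsum)
    (integrableOn_half_exp_mul_logb_one_add_sinr hL2 hσ hγ2.1 hsum)
    (hmeas L1).aestronglyMeasurable (hmeas L2).aestronglyMeasurable
  rw [integral_half_exp_Ioi, mul_one, one_mul,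
    integral_half_exp_mul_logb_one_add_sinr hL1 hσ hγ2.1 hsum,
    integral_half_exp_mul_logb_one_add_sinr hL2 hσ hγ2.1 hsum] at key
  refine key.trans_eq (integral_congr_ae (ae_of_all _ fun x1 =>
    integral_congr_ae (ae_of_all _ fun x2 => ?_)))
  ring

theorem stmt7 (L1 L2 σ2 γ1 γ2 : ℝ) (hL1 : 0 < L1) (hL2 : 0 < L2) (hσ : 0 < σ2)
    (hγ1 : γ1 ∈ Set.Ioo (0:ℝ) 1) (hγ2 : γ2 ∈ Set.Ioo (0:ℝ) 1) (hsum : γ1 + γ2 = 1) :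
    (∫ x1 in Set.Ioi (0:ℝ), ∫ x2 in Set.Ioi (0:ℝ),
      (1/4) * Real.exp (-x1/2) * Real.exp (-x2/2) *
        max (Real.logb 2 (1 + γ1 * L1 * x1 / (γ2 * L1 * x1 + 2 * σ2)))
            (Real.logb 2 (1 + γ1 * L2 * x2 / (γ2 * L2 * x2 + 2 * σ2))))
      ≥ max (C1 (L1 / σ2) - C1 (γ2 * L1 / σ2)) (C1 (L2 / σ2) - C1 (γ2 * L2 / σ2)) :=
  stmt7_general L1 L2 σ2 γ1 γ2 hL1 hL2 hσ hγ2 hsum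
end

section
/- For every β ∈ (0,1), the function x ↦ C₁(x) − C₁(βx) is increasing on (0,∞): for all real x, y with 0 < x ≤ y, one has C₁(x) − C₁(βx) ≤ C₁(y) − C₁(βy). -/
open Real MeasureTheory Set

/-!
Shifting `t = 1 + w` absorbs the factor `e^{1/x}`, giving `ln 2 · C₁(x) = ∫₀^∞ e^{-w/x} / (1 + w) dw`,
and rescaling `w ↦ β w` gives `ln 2 · C₁(βx) = ∫₀^∞ β e^{-w/x} / (1 + β w) dw`. Hence
`ln 2 · (C₁(x) - C₁(βx)) = ∫₀^∞ k(w) e^{-w/x} dw` with the kernel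
`k(w) = 1/(1 + w) - β/(1 + β w) = (1 - β) / ((1 + w)(1 + β w)) ≥ 0` independent of `x`,
while `e^{-w/x}` increases with `x`.
-/

theorem integral_comp_add_right_Ioi {E : Type*} [NormedAddCommGroup E] [NormedSpace ℝ E]
    (g : ℝ → E) (a d : ℝ) : ∫ x in Ioi a, g (x + d) = ∫ x in Ioi (a + d), g x := by
  have := (measurePreserving_add_right volume d).setIntegral_preimage_emb
    (measurableEmbedding_addRight d) g (Ioi (a + d))
  simpa [preimage_add_const_Ioi] using this

theorem C1_eq_integral (x : ℝ) :
    C1 x = (log 2)⁻¹ * ∫ w in Ioi 0, (1 + w)⁻¹ * exp (-w / x) := by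
  have hshift := integral_comp_add_right_Ioi (fun t => t⁻¹ * exp (-t / x)) 0 1
  rw [zero_add] at hshift
  rw [C1, ← hshift, one_div, mul_assoc, ← integral_const_mul]
  congr 1
  refine integral_congr_ae (ae_of_all _ fun w => ?_)
  simp only
  rw [mul_left_comm, ← exp_add, add_comm w]
  congr 2
  ring

theorem C1_mul_eq_integral {β : ℝ} (hβ : 0 < β) (x : ℝ) :
    C1 (β * x) = (log 2)⁻¹ * ∫ w in Ioi 0, β * (1 + β * w)⁻¹ * exp (-w / x) := by
  have hscale := integral_comp_mul_left_Ioi' (fun w => (1 + w)⁻¹ * exp (-w / (β * x))) 0 hβ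
  rw [mul_zero] at hscale
  rw [C1_eq_integral, ← hscale, smul_eq_mul, ← integral_const_mul]
  congr 1
  refine integral_congr_ae (ae_of_all _ fun w => ?_)
  simp only
  rw [neg_mul_eq_mul_neg, mul_div_mul_left _ _ hβ.ne', mul_assoc]

theorem integrableOn_Ioi_mul_exp_neg_div {g : ℝ → ℝ} {C x : ℝ}
    (hg : AEStronglyMeasurable g (volume.restrict (Ioi 0))) (hC : ∀ w ∈ Ioi (0 : ℝ), ‖g w‖ ≤ C)
    (hx : 0 < x) : IntegrableOn (fun w => g w * exp (-w / x)) (Ioi 0) := by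
  have hexp : IntegrableOn (fun w => exp (-x⁻¹ * w)) (Ioi 0) :=
    exp_neg_integrableOn_Ioi 0 (inv_pos.mpr hx)
  simp_rw [neg_div, div_eq_inv_mul, ← neg_mul]
  exact hexp.bdd_mul hg (ae_restrict_of_forall_mem measurableSet_Ioi hC)

theorem monotoneOn_integral_Ioi_mul_exp_neg_div {g : ℝ → ℝ} {C : ℝ}
    (hg : AEStronglyMeasurable g (volume.restrict (Ioi 0))) (hC : ∀ w ∈ Ioi (0 : ℝ), ‖g w‖ ≤ C)
    (hg0 : ∀ w ∈ Ioi (0 : ℝ), 0 ≤ g w) :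
    MonotoneOn (fun x => ∫ w in Ioi 0, g w * exp (-w / x)) (Ioi 0) := by
  intro x hx y hy hxy
  refine setIntegral_mono_on (integrableOn_Ioi_mul_exp_neg_div hg hC hx)
    (integrableOn_Ioi_mul_exp_neg_div hg hC hy) measurableSet_Ioi fun w hw => ?_
  have hw : 0 < w := hw
  have hx : 0 < x := hx
  have hexp : -w / x ≤ -w / y := by rw [neg_div, neg_div, neg_le_neg_iff]; gcongr
  exact mul_le_mul_of_nonneg_left (exp_le_exp.mpr hexp) (hg0 w hw)

theorem inv_one_add_sub_mul_inv_one_add_mul_nonneg {β w : ℝ} (hβ0 : 0 ≤ β) (hβ1 : β ≤ 1)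
    (hw : 0 ≤ w) : 0 ≤ (1 + w)⁻¹ - β * (1 + β * w)⁻¹ := by
  rw [sub_nonneg, ← div_eq_mul_inv, div_le_iff₀ (by positivity), inv_mul_eq_div,
    le_div_iff₀ (by positivity)]
  nlinarith

theorem norm_inv_one_add_le_one {w : ℝ} (hw : 0 ≤ w) : ‖(1 + w)⁻¹‖ ≤ 1 := by
  rw [norm_inv, Real.norm_of_nonneg (by positivity)]
  exact inv_le_one_of_one_le₀ (by linarith)

theorem C1_sub_C1_mul_eq_integral {β x : ℝ} (hβ : 0 < β) (hx : 0 < x) :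
    C1 x - C1 (β * x) =
      (log 2)⁻¹ * ∫ w in Ioi 0, ((1 + w)⁻¹ - β * (1 + β * w)⁻¹) * exp (-w / x) := by
  have hint₁ : IntegrableOn (fun w => (1 + w)⁻¹ * exp (-w / x)) (Ioi 0) :=
    integrableOn_Ioi_mul_exp_neg_div (C := 1) (by fun_prop)
      (fun w hw => norm_inv_one_add_le_one (le_of_lt hw)) hx
  have hint₂ : IntegrableOn (fun w => β * (1 + β * w)⁻¹ * exp (-w / x)) (Ioi 0) := by
    refine integrableOn_Ioi_mul_exp_neg_div (C := β) (by fun_prop) (fun w hw => ?_) hx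
    have hw : 0 < w := hw
    rw [norm_mul, Real.norm_of_nonneg hβ.le]
    exact mul_le_of_le_one_right hβ.le (norm_inv_one_add_le_one (by positivity))
  rw [C1_eq_integral, C1_mul_eq_integral hβ, ← mul_sub, ← integral_sub hint₁ hint₂]
  simp_rw [sub_mul]

theorem stmt10 : ∀ β : ℝ, 0 < β → β < 1 → ∀ x y : ℝ, 0 < x → x ≤ y →
    C1 x - C1 (β * x) ≤ C1 y - C1 (β * y) := by
  intro β hβ0 hβ1 x y hx hxy
  have hy : 0 < y := hx.trans_le hxy
  have hkernel0 : ∀ w ∈ Ioi (0 : ℝ), 0 ≤ (1 + w)⁻¹ - β * (1 + β * w)⁻¹ := fun w hw =>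
    inv_one_add_sub_mul_inv_one_add_mul_nonneg hβ0.le hβ1.le (le_of_lt hw)
  have hkernel1 : ∀ w ∈ Ioi (0 : ℝ), ‖(1 + w)⁻¹ - β * (1 + β * w)⁻¹‖ ≤ 1 := fun w hw => by
    have hw : 0 < w := hw
    calc ‖(1 + w)⁻¹ - β * (1 + β * w)⁻¹‖ = (1 + w)⁻¹ - β * (1 + β * w)⁻¹ :=
          Real.norm_of_nonneg (hkernel0 w hw)
      _ ≤ (1 + w)⁻¹ := sub_le_self _ (by positivity)
      _ ≤ 1 := inv_le_one_of_one_le₀ (by linarith)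
  have hmono := monotoneOn_integral_Ioi_mul_exp_neg_div (by fun_prop) hkernel1 hkernel0
  rw [C1_sub_C1_mul_eq_integral hβ0 hx, C1_sub_C1_mul_eq_integral hβ0 hy]
  exact mul_le_mul_of_nonneg_left (hmono hx hy hxy) (by positivity)
end

section
/- Let L, σ² > 0, γ₁, γ₂, α₁, α₂ ∈ (0,1) with γ₁ + γ₂ = 1 and α₁ + α₂ = 1, and assume L/σ² > 1, γ₁L/(α₁σ²) > 1, and γ₂L/(α₂σ²) > 1. Then 2·C₁(L/σ²) − C₁(γ₂L/σ²) − C₁(L/(2σ²)) + C₁(γ₂L/(2σ²)) > α₁·C₁(γ₁L/(α₁σ²)) + α₂·C₁(γ₂L/(α₂σ²)). (The left side is the ergodic capacity of bi-directional cooperative NOMA with equal channel variances L₁ = L₂ = L; the right side is the ergodic capacity of OMA.) -/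
/-! Substituting `t = 1 + x z` and integrating by parts turns `C₁(x) · ln 2` into
`logMoment x = ∫₀^∞ e^{-z} ln (1 + x z) dz`, the mean of `ln (1 + x Z)` for `Z ~ Exp(1)`.
This function is concave, so the OMA side is at most `logMoment b` with `b = L/σ²`, the
weighted mean `α₁c₁ + α₂c₂` of the OMA arguments. For the NOMA side,
`(1 + b z)(1 + γ₂ b z / 2) - (1 + γ₂ b z)(1 + b z / 2) = (1 - γ₂) b z / 2 > 0`, hence
`logMoment (γ₂ b) + logMoment (b / 2) < logMoment b + logMoment (γ₂ b / 2)`, i.e. the NOMA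
side exceeds `logMoment b`. -/

open Real MeasureTheory Set

open Filter Topology

theorem setIntegral_lt_setIntegral_of_forall_lt {X : Type*} [MeasurableSpace X] {μ : Measure X}
    {s : Set X} {f g : X → ℝ} (hs : MeasurableSet s) (hμs : μ s ≠ 0)
    (hf : IntegrableOn f s μ) (hg : IntegrableOn g s μ) (hlt : ∀ x ∈ s, f x < g x) :
    ∫ x in s, f x ∂μ < ∫ x in s, g x ∂μ := by
  rw [← sub_pos, ← integral_sub hg hf]
  have hsupp : Function.support (g - f) ∩ s = s :=
    inter_eq_right.2 fun x hx => (sub_pos.2 (hlt x hx)).ne'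
  refine (setIntegral_pos_iff_support_of_nonneg_ae ?_ (hg.sub hf)).2 ?_
  · filter_upwards [ae_restrict_mem hs] with x hx using (sub_pos.2 (hlt x hx)).le
  · rw [hsupp]
    exact pos_iff_ne_zero.2 hμs

theorem ConcaveOn.setIntegral {X : Type*} [MeasurableSpace X] {μ : Measure X} {s : Set X}
    (hs : MeasurableSet s) {I : Set ℝ} {F : ℝ → X → ℝ}
    (hint : ∀ x ∈ I, IntegrableOn (F x) s μ) (hconc : ∀ z ∈ s, ConcaveOn ℝ I (F · z))
    (hI : Convex ℝ I) :
    ConcaveOn ℝ I (fun x => ∫ z in s, F x z ∂μ) := by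
  refine ⟨hI, fun x hx y hy a b ha hb hab => ?_⟩
  calc a • ∫ z in s, F x z ∂μ + b • ∫ z in s, F y z ∂μ
      = ∫ z in s, a • F x z + b • F y z ∂μ := by
        rw [← integral_smul, ← integral_smul, ← integral_add]
        exacts [(hint x hx).smul a, (hint y hy).smul b]
    _ ≤ ∫ z in s, F (a • x + b • y) z ∂μ :=
        setIntegral_mono_on (((hint x hx).smul a).add ((hint y hy).smul b))
          (hint _ (hI hx hy ha hb hab)) hs fun z hz => (hconc z hz).2 hx hy ha hb hab

theorem Real.log_one_add_mem_Icc {y : ℝ} (hy : 0 ≤ y) : log (1 + y) ∈ Icc 0 y := by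
  refine ⟨log_nonneg (by linarith), ?_⟩
  linarith [log_le_sub_one_of_pos (by linarith : 0 < 1 + y)]

noncomputable def logMoment (x : ℝ) : ℝ :=
  ∫ z in Ioi (0:ℝ), exp (-z) * log (1 + x * z)

theorem integrableOn_exp_neg_mul_log_one_add_mul {x : ℝ} (hx : 0 ≤ x) :
    IntegrableOn (fun z => exp (-z) * log (1 + x * z)) (Ioi 0) := by
  refine ((GammaIntegral_convergent two_pos).const_mul x).mono'
    (by fun_prop : Measurable _).aestronglyMeasurable ?_
  filter_upwards [ae_restrict_mem measurableSet_Ioi] with z (hz : 0 < z)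
  obtain ⟨hlog₀, hlog⟩ := log_one_add_mem_Icc (mul_nonneg hx hz.le)
  rw [norm_mul, norm_of_nonneg (exp_pos _).le, norm_of_nonneg hlog₀]
  rw [show (2:ℝ) - 1 = 1 by norm_num, rpow_one]
  nlinarith [exp_pos (-z)]

theorem integrableOn_exp_neg_mul_div_one_add_mul {x : ℝ} (hx : 0 ≤ x) :
    IntegrableOn (fun z => exp (-z) * (x / (1 + x * z))) (Ioi 0) := by
  refine ((integrableOn_exp_neg_Ioi 0).mul_const x).mono'
    (by fun_prop : Measurable _).aestronglyMeasurable ?_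
  filter_upwards [ae_restrict_mem measurableSet_Ioi] with z (hz : 0 < z)
  have h1 : 1 ≤ 1 + x * z := by nlinarith
  rw [norm_mul, norm_of_nonneg (exp_pos _).le, norm_of_nonneg (by positivity)]
  gcongr
  exact div_le_self hx h1

theorem integral_exp_neg_mul_div_one_add_mul {x : ℝ} (hx : 0 ≤ x) :
    ∫ z in Ioi (0:ℝ), exp (-z) * (x / (1 + x * z)) = logMoment x := by
  have hderiv : ∀ z ∈ Ici (0:ℝ), HasDerivAt (fun z => -(exp (-z) * log (1 + x * z)))
      (exp (-z) * log (1 + x * z) - exp (-z) * (x / (1 + x * z))) z := by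
    intro z (hz : 0 ≤ z)
    have hpos : 0 < 1 + x * z := by positivity
    have hexp : HasDerivAt (fun z => exp (-z)) (-exp (-z)) z := by
      simpa using (hasDerivAt_neg z).exp
    have hlog : HasDerivAt (fun z => log (1 + x * z)) (x / (1 + x * z)) z := by
      simpa using (((hasDerivAt_id z).const_mul x).const_add 1).log hpos.ne'
    exact (hexp.mul hlog).neg.congr_deriv (by ring)
  have hlim : Tendsto (fun z => -(exp (-z) * log (1 + x * z))) atTop (𝓝 0) := by
    have hbound : Tendsto (fun z => x * (z ^ 1 * exp (-z))) atTop (𝓝 0) := by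
      simpa using (tendsto_pow_mul_exp_neg_atTop_nhds_zero 1).const_mul x
    have hsq : Tendsto (fun z => exp (-z) * log (1 + x * z)) atTop (𝓝 0) := by
      refine tendsto_of_tendsto_of_tendsto_of_le_of_le' tendsto_const_nhds hbound ?_ ?_ <;>
        filter_upwards [eventually_ge_atTop 0] with z hz <;>
        obtain ⟨hlog₀, hlog⟩ := log_one_add_mem_Icc (mul_nonneg hx hz)
      · positivity
      · rw [pow_one]
        nlinarith [exp_pos (-z)]
    simpa using hsq.neg
  have hFTC := integral_Ioi_of_hasDerivAt_of_tendsto' hderiv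
    ((integrableOn_exp_neg_mul_log_one_add_mul hx).sub
      (integrableOn_exp_neg_mul_div_one_add_mul hx)) hlim
  rw [integral_sub (integrableOn_exp_neg_mul_log_one_add_mul hx)
    (integrableOn_exp_neg_mul_div_one_add_mul hx)] at hFTC
  simp only [neg_zero, exp_zero, mul_zero, add_zero, log_one, sub_self] at hFTC
  rw [logMoment]
  linarith

theorem integral_Ioi_comp_add_mul (f : ℝ → ℝ) (c : ℝ) {x : ℝ} (hx : 0 < x) :
    ∫ z in Ioi (0:ℝ), f (c + x * z) = x⁻¹ * ∫ t in Ioi c, f t := by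
  rw [integral_comp_mul_left_Ioi (fun u => f (c + u)) 0 hx, mul_zero, smul_eq_mul]
  have hpre : (c + ·) ⁻¹' Ioi c = Ioi 0 := by ext; simp
  rw [← hpre, (measurePreserving_add_left volume c).setIntegral_preimage_emb
    (MeasurableEquiv.addLeft c).measurableEmbedding f]

theorem integral_Ioi_one_inv_mul_exp_neg_div {x : ℝ} (hx : 0 < x) :
    ∫ t in Ioi (1:ℝ), t⁻¹ * exp (-t / x)
      = exp (-x⁻¹) * ∫ z in Ioi (0:ℝ), exp (-z) * (x / (1 + x * z)) := by
  have h := integral_Ioi_comp_add_mul (fun t => t⁻¹ * exp (-t / x)) 1 hx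
  rw [eq_inv_mul_iff_mul_eq₀ hx.ne'] at h
  rw [← h, ← integral_const_mul, ← integral_const_mul]
  refine setIntegral_congr_fun measurableSet_Ioi fun z (hz : 0 < z) => ?_
  have hexp : -(1 + x * z) / x = -x⁻¹ + -z := by field_simp; ring
  rw [hexp, exp_add]
  field_simp

theorem C1_eq_logMoment_div {x : ℝ} (hx : 0 < x) : C1 x = logMoment x / log 2 := by
  rw [C1, integral_Ioi_one_inv_mul_exp_neg_div hx, integral_exp_neg_mul_div_one_add_mul hx.le,
    exp_neg]
  field_simp

theorem concaveOn_exp_neg_mul_log_one_add_mul {z : ℝ} (hz : 0 ≤ z) :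
    ConcaveOn ℝ (Ici 0) (fun x => exp (-z) * log (1 + x * z)) := by
  refine ⟨convex_Ici 0, fun x (hx : 0 ≤ x) y (hy : 0 ≤ y) a b ha hb hab => ?_⟩
  have hlog := strictConcaveOn_log_Ioi.concaveOn.2 (show 0 < 1 + x * z by positivity)
    (show 0 < 1 + y * z by positivity) ha hb hab
  have harg : a • (1 + x * z) + b • (1 + y * z) = 1 + (a • x + b • y) * z := by
    simp only [smul_eq_mul]
    linear_combination hab
  rw [harg] at hlog
  simp only [smul_eq_mul] at hlog ⊢
  calc a * (exp (-z) * log (1 + x * z)) + b * (exp (-z) * log (1 + y * z))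
      = exp (-z) * (a * log (1 + x * z) + b * log (1 + y * z)) := by ring
    _ ≤ exp (-z) * log (1 + (a * x + b * y) * z) :=
      mul_le_mul_of_nonneg_left hlog (exp_pos _).le

theorem concaveOn_logMoment : ConcaveOn ℝ (Ici 0) logMoment :=
  ConcaveOn.setIntegral measurableSet_Ioi (fun _ hx => integrableOn_exp_neg_mul_log_one_add_mul hx)
    (fun _ hz => concaveOn_exp_neg_mul_log_one_add_mul (le_of_lt hz)) (convex_Ici 0)

theorem logMoment_add_logMoment_lt {p q r s : ℝ} (hp : 0 ≤ p) (hq : 0 ≤ q) (hr : 0 ≤ r)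
    (hs : 0 ≤ s) (hmul : r * s = p * q) (hadd : r + s < p + q) :
    logMoment r + logMoment s < logMoment p + logMoment q := by
  have hint {x : ℝ} (hx : 0 ≤ x) := integrableOn_exp_neg_mul_log_one_add_mul hx
  unfold logMoment
  rw [← integral_add (hint hr) (hint hs), ← integral_add (hint hp) (hint hq)]
  refine setIntegral_lt_setIntegral_of_forall_lt measurableSet_Ioi (by simp)
    ((hint hr).add (hint hs)) ((hint hp).add (hint hq)) fun z (hz : 0 < z) => ?_
  have hprod : (1 + r * z) * (1 + s * z) < (1 + p * z) * (1 + q * z) := by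
    linear_combination mul_lt_mul_of_pos_right hadd hz + z ^ 2 * hmul
  have hlog := log_lt_log (by positivity) hprod
  rw [log_mul (by positivity) (by positivity), log_mul (by positivity) (by positivity)] at hlog
  simp only [← mul_add]
  exact mul_lt_mul_of_pos_left hlog (exp_pos _)

theorem stmt11_general (L σ2 γ1 γ2 α1 α2 : ℝ) (hL : 0 < L) (hσ : 0 < σ2)
    (hγ1 : γ1 ∈ Set.Ioo (0:ℝ) 1) (hγ2 : γ2 ∈ Set.Ioo (0:ℝ) 1) (hγ : γ1 + γ2 = 1)
    (hα1 : α1 ∈ Set.Ioo (0:ℝ) 1) (hα2 : α2 ∈ Set.Ioo (0:ℝ) 1) (hα : α1 + α2 = 1) :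
    2 * C1 (L / σ2) - C1 (γ2 * L / σ2) - C1 (L / (2 * σ2)) + C1 (γ2 * L / (2 * σ2))
      > α1 * C1 (γ1 * L / (α1 * σ2)) + α2 * C1 (γ2 * L / (α2 * σ2)) := by
  obtain ⟨hγ1₀, -⟩ := hγ1
  obtain ⟨hγ2₀, hγ2₁⟩ := hγ2
  obtain ⟨hα1₀, -⟩ := hα1
  obtain ⟨hα2₀, -⟩ := hα2
  set b := L / σ2
  set c1 := γ1 * L / (α1 * σ2)
  set c2 := γ2 * L / (α2 * σ2)
  have hb : 0 < b := by positivity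
  have hc1 : 0 < c1 := by positivity
  have hc2 : 0 < c2 := by positivity
  have hmean : α1 * c1 + α2 * c2 = b := by
    simp only [c1, c2, b]
    field_simp
    linear_combination hγ
  have hjensen : α1 * logMoment c1 + α2 * logMoment c2 ≤ logMoment b := by
    simpa only [smul_eq_mul, hmean] using concaveOn_logMoment.2 hc1.le hc2.le hα1₀.le hα2₀.le hα
  have hsuper : logMoment (γ2 * b) + logMoment (b / 2) < logMoment b + logMoment (γ2 * b / 2) :=
    logMoment_add_logMoment_lt hb.le (by positivity) (by positivity) (by positivity)
      (by ring) (by nlinarith)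
  rw [show γ2 * L / σ2 = γ2 * b by ring, show L / (2 * σ2) = b / 2 by ring,
    show γ2 * L / (2 * σ2) = γ2 * b / 2 by ring]
  simp only [C1_eq_logMoment_div, hb, hc1, hc2, mul_pos hγ2₀ hb, half_pos, gt_iff_lt]
  have hlog2 : 0 < log 2 := log_pos one_lt_two
  calc α1 * (logMoment c1 / log 2) + α2 * (logMoment c2 / log 2)
      = (α1 * logMoment c1 + α2 * logMoment c2) / log 2 := by ring
    _ < (2 * logMoment b - logMoment (γ2 * b) - logMoment (b / 2) + logMoment (γ2 * b / 2))
        / log 2 := (div_lt_div_iff_of_pos_right hlog2).2 (by linarith)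
    _ = _ := by ring

theorem stmt11 (L σ2 γ1 γ2 α1 α2 : ℝ) (hL : 0 < L) (hσ : 0 < σ2)
    (hγ1 : γ1 ∈ Set.Ioo (0:ℝ) 1) (hγ2 : γ2 ∈ Set.Ioo (0:ℝ) 1) (hγ : γ1 + γ2 = 1)
    (hα1 : α1 ∈ Set.Ioo (0:ℝ) 1) (hα2 : α2 ∈ Set.Ioo (0:ℝ) 1) (hα : α1 + α2 = 1)
    (h1 : 1 < L / σ2) (h2 : 1 < γ1 * L / (α1 * σ2)) (h3 : 1 < γ2 * L / (α2 * σ2)) :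
    2 * C1 (L / σ2) - C1 (γ2 * L / σ2) - C1 (L / (2 * σ2)) + C1 (γ2 * L / (2 * σ2))
      > α1 * C1 (γ1 * L / (α1 * σ2)) + α2 * C1 (γ2 * L / (α2 * σ2)) :=
  stmt11_general L σ2 γ1 γ2 α1 α2 hL hσ hγ1 hγ2 hγ hα1 hα2 hα
end
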